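/- Each k-horizon map φ_k is monotone and concave with respect to the Loewner order: for all positive semidefinite Σ₁ ⪯ Σ₂, φ_k(Σ₁) ⪯ φ_k(Σ₂); and for all α ∈ [0,1] and positive semidefinite Σ₁, Σ₂, φ_k(αΣ₁ + (1−α)Σ₂) ⪰ α φ_k(Σ₁) + (1−α) φ_k(Σ₂). -/

import Mathlib

/-!
For a fixed gain `W`, the one-step covariance `Σ ↦ (I - W C)(A Σ Aᵀ + Q)(I - W C)ᵀ + W R Wᵀ`
is affine and monotone in `Σ`. Among the gains with `W (C G) = G`, the filter gain `W̃(Σ)` is the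
Loewner-least one: completing the square gives
`covUpdate W Σ - ρ(Σ) = (W - W̃) R̃(Σ) (W - W̃)ᵀ ⪰ 0`, the cross term vanishing because
`W̃ R̃ - (A Σ Aᵀ + Q) Cᵀ` factors through `(C G)ᵀ` while `(W - W̃) C G = 0`. Hence `ρ` is a
pointwise minimum of monotone affine maps, so it is monotone and concave on the PSD cone, which
it preserves; `φ_k` inherits both properties because a monotone concave map composed with a
concave map is concave.
-/

open Matrix BigOperators

noncomputable section

/-- `R̃(Σ) = C (A Σ Aᵀ + Q) Cᵀ + R`. -/
def Rt {ny nz : ℕ} (A Q : Matrix (Fin ny) (Fin ny) ℝ)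
    (C : Matrix (Fin nz) (Fin ny) ℝ) (R : Matrix (Fin nz) (Fin nz) ℝ)
    (S : Matrix (Fin ny) (Fin ny) ℝ) : Matrix (Fin nz) (Fin nz) ℝ :=
  C * (A * S * Aᵀ + Q) * Cᵀ + R

/-- Optimal unknown-input filter gain `M(Σ)`. -/
def Mg {ny nz nd : ℕ} (A Q : Matrix (Fin ny) (Fin ny) ℝ) (G : Matrix (Fin ny) (Fin nd) ℝ)
    (C : Matrix (Fin nz) (Fin ny) ℝ) (R : Matrix (Fin nz) (Fin nz) ℝ)
    (S : Matrix (Fin ny) (Fin ny) ℝ) : Matrix (Fin nd) (Fin nz) ℝ :=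
  ((C * G)ᵀ * (Rt A Q C R S)⁻¹ * (C * G))⁻¹ * (C * G)ᵀ * (Rt A Q C R S)⁻¹

/-- Optimal state filter gain `K(Σ)`. -/
def Kg {ny nz : ℕ} (A Q : Matrix (Fin ny) (Fin ny) ℝ)
    (C : Matrix (Fin nz) (Fin ny) ℝ) (R : Matrix (Fin nz) (Fin nz) ℝ)
    (S : Matrix (Fin ny) (Fin ny) ℝ) : Matrix (Fin ny) (Fin nz) ℝ :=
  (A * S * Aᵀ + Q) * Cᵀ * (Rt A Q C R S)⁻¹

/-- Closed loop matrix `Ã(Σ)`. -/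
def Atil {ny nz nd : ℕ} (A Q : Matrix (Fin ny) (Fin ny) ℝ) (G : Matrix (Fin ny) (Fin nd) ℝ)
    (C : Matrix (Fin nz) (Fin ny) ℝ) (R : Matrix (Fin nz) (Fin nz) ℝ)
    (S : Matrix (Fin ny) (Fin ny) ℝ) : Matrix (Fin ny) (Fin ny) ℝ :=
  (1 - Kg A Q C R S * C) * (1 - G * Mg A Q G C R S * C) * A

/-- `F̃(Σ)`. -/
def Ftil {ny nz nd : ℕ} (A Q : Matrix (Fin ny) (Fin ny) ℝ) (G : Matrix (Fin ny) (Fin nd) ℝ)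
    (C : Matrix (Fin nz) (Fin ny) ℝ) (R : Matrix (Fin nz) (Fin nz) ℝ)
    (S : Matrix (Fin ny) (Fin ny) ℝ) : Matrix (Fin ny) (Fin ny) ℝ :=
  -((1 - Kg A Q C R S * C) * (1 - G * Mg A Q G C R S * C))

/-- `W̃(Σ)`. -/
def Wtil {ny nz nd : ℕ} (A Q : Matrix (Fin ny) (Fin ny) ℝ) (G : Matrix (Fin ny) (Fin nd) ℝ)
    (C : Matrix (Fin nz) (Fin ny) ℝ) (R : Matrix (Fin nz) (Fin nz) ℝ)
    (S : Matrix (Fin ny) (Fin ny) ℝ) : Matrix (Fin ny) (Fin nz) ℝ :=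
  G * Mg A Q G C R S - Kg A Q C R S * C * G * Mg A Q G C R S + Kg A Q C R S

/-- The state error covariance update map `ρ(Σ)`. -/
def rho {ny nz nd : ℕ} (A Q : Matrix (Fin ny) (Fin ny) ℝ) (G : Matrix (Fin ny) (Fin nd) ℝ)
    (C : Matrix (Fin nz) (Fin ny) ℝ) (R : Matrix (Fin nz) (Fin nz) ℝ)
    (S : Matrix (Fin ny) (Fin ny) ℝ) : Matrix (Fin ny) (Fin ny) ℝ :=
  Atil A Q G C R S * S * (Atil A Q G C R S)ᵀ
    + Ftil A Q G C R S * Q * (Ftil A Q G C R S)ᵀ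
    + Wtil A Q G C R S * R * (Wtil A Q G C R S)ᵀ

/-- The unknown-input error covariance update map `ρᵈ(Σ)`. -/
def rhod {ny nz nd : ℕ} (A Q : Matrix (Fin ny) (Fin ny) ℝ) (G : Matrix (Fin ny) (Fin nd) ℝ)
    (C : Matrix (Fin nz) (Fin ny) ℝ) (R : Matrix (Fin nz) (Fin nz) ℝ)
    (S : Matrix (Fin ny) (Fin ny) ℝ) : Matrix (Fin nd) (Fin nd) ℝ :=
  ((C * G)ᵀ * (Rt A Q C R S)⁻¹ * (C * G))⁻¹

/-- The k-horizon map `φ_k = ρ_k ∘ ⋯ ∘ ρ_1`, where step `t` (here `t = k+1`) uses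
the data `(A_{t-1}, Q_{t-1}, G_{t-1}, C_t, R_t)`. -/
def phiMap {ny nz nd : ℕ} (A Q : ℕ → Matrix (Fin ny) (Fin ny) ℝ)
    (G : ℕ → Matrix (Fin ny) (Fin nd) ℝ) (C : ℕ → Matrix (Fin nz) (Fin ny) ℝ)
    (R : ℕ → Matrix (Fin nz) (Fin nz) ℝ) :
    ℕ → Matrix (Fin ny) (Fin ny) ℝ → Matrix (Fin ny) (Fin ny) ℝ
  | 0, S => S
  | k + 1, S => rho (A k) (Q k) (G k) (C (k + 1)) (R (k + 1)) (phiMap A Q G C R k S)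

/-- `Ψ_k := Ã_k Ã_{k-1} ⋯ Ã_1` where `Ã_t` is evaluated at `Σ_{t-1} = φ_{t-1}(Σ₀)`
with step-`t` data (and `Ψ_0 = I`). -/
def PsiProd {ny nz nd : ℕ} (A Q : ℕ → Matrix (Fin ny) (Fin ny) ℝ)
    (G : ℕ → Matrix (Fin ny) (Fin nd) ℝ) (C : ℕ → Matrix (Fin nz) (Fin ny) ℝ)
    (R : ℕ → Matrix (Fin nz) (Fin nz) ℝ) (S0 : Matrix (Fin ny) (Fin ny) ℝ) :
    ℕ → Matrix (Fin ny) (Fin ny) ℝ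
  | 0 => 1
  | k + 1 =>
      Atil (A k) (Q k) (G k) (C (k + 1)) (R (k + 1)) (phiMap A Q G C R k S0) *
        PsiProd A Q G C R S0 k

open Set
open scoped MatrixOrder

section LeastValue

variable {𝕜 E β γ ι : Type*}

theorem monotoneOn_of_isLeast_range [Preorder E] [Preorder β] {s : Set E} {f : E → β}
    {g : ι → E → β} (hg : ∀ i, MonotoneOn (g i) s)
    (hf : ∀ x ∈ s, IsLeast (range fun i ↦ g i x) (f x)) : MonotoneOn f s := by
  intro x hx y hy hxy
  obtain ⟨i, hi⟩ := (hf y hy).1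
  calc f x ≤ g i x := (hf x hx).2 ⟨i, rfl⟩
    _ ≤ g i y := hg i hx hy hxy
    _ = f y := hi

variable [Semiring 𝕜] [PartialOrder 𝕜] [AddCommMonoid E] [SMul 𝕜 E]

theorem concaveOn_of_isLeast_range [AddCommMonoid β] [PartialOrder β] [IsOrderedAddMonoid β]
    [SMul 𝕜 β] [PosSMulMono 𝕜 β] {s : Set E} {f : E → β} {g : ι → E → β} (hs : Convex 𝕜 s)
    (hg : ∀ i, ConcaveOn 𝕜 s (g i)) (hf : ∀ x ∈ s, IsLeast (range fun i ↦ g i x) (f x)) :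
    ConcaveOn 𝕜 s f := by
  refine ⟨hs, fun x hx y hy a b ha hb hab ↦ ?_⟩
  obtain ⟨i, hi⟩ := (hf _ (hs hx hy ha hb hab)).1
  calc a • f x + b • f y ≤ a • g i x + b • g i y :=
        add_le_add (smul_le_smul_of_nonneg_left ((hf x hx).2 ⟨i, rfl⟩) ha)
          (smul_le_smul_of_nonneg_left ((hf y hy).2 ⟨i, rfl⟩) hb)
    _ ≤ g i (a • x + b • y) := (hg i).2 hx hy ha hb hab
    _ = f (a • x + b • y) := hi

theorem ConcaveOn.comp_of_mapsTo [AddCommMonoid β] [PartialOrder β] [SMul 𝕜 β]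
    [AddCommMonoid γ] [PartialOrder γ] [SMul 𝕜 γ] {s : Set E} {t : Set β} {f : E → β}
    {h : β → γ} (hh : ConcaveOn 𝕜 t h) (hh' : MonotoneOn h t) (hf : ConcaveOn 𝕜 s f)
    (hst : MapsTo f s t) : ConcaveOn 𝕜 s (h ∘ f) := by
  refine ⟨hf.1, fun x hx y hy a b ha hb hab ↦ ?_⟩
  have hmix : a • f x + b • f y ∈ t := hh.1 (hst hx) (hst hy) ha hb hab
  exact (hh.2 (hst hx) (hst hy) ha hb hab).trans
    (hh' hmix (hst (hf.1 hx hy ha hb hab)) (hf.2 hx hy ha hb hab))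

end LeastValue

namespace Matrix

variable {m n : Type*} [Fintype n]

theorem PosSemidef.mul_mul_transpose_same [Fintype m] {A : Matrix n n ℝ} (hA : A.PosSemidef)
    (B : Matrix m n ℝ) : (B * A * Bᵀ).PosSemidef := by
  simpa only [conjTranspose_eq_transpose_of_trivial] using hA.mul_mul_conjTranspose_same B

theorem mulVec_injective_of_rank_eq {K : Type*} [Field K] {F : Matrix m n K}
    (hF : F.rank = Fintype.card n) : Function.Injective F.mulVec := by
  have hker : Module.finrank K (LinearMap.ker F.mulVecLin) = 0 := by
    have := LinearMap.finrank_range_add_finrank_ker F.mulVecLin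
    rw [← Matrix.rank, hF, Module.finrank_fintype_fun_eq_card] at this
    omega
  exact LinearMap.ker_eq_bot.mp (Submodule.finrank_eq_zero.mp hker)

theorem PosDef.transpose_mul_mul_same_of_rank_eq [Fintype m]
    {X : Matrix m m ℝ} (hX : X.PosDef) {F : Matrix m n ℝ} (hF : F.rank = Fintype.card n) :
    (Fᵀ * X * F).PosDef := by
  simpa only [conjTranspose_eq_transpose_of_trivial] using
    hX.conjTranspose_mul_mul_same (mulVec_injective_of_rank_eq hF)

end Matrix

section CovUpdate

variable {ny nz nd : ℕ} (A Q : Matrix (Fin ny) (Fin ny) ℝ) (G : Matrix (Fin ny) (Fin nd) ℝ)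
  (C : Matrix (Fin nz) (Fin ny) ℝ) (R : Matrix (Fin nz) (Fin nz) ℝ)

/-- The error covariance after one step of the filter run with an arbitrary gain `W` in place
of `W̃(Σ)`. -/
def covUpdate (W : Matrix (Fin ny) (Fin nz) ℝ) (S : Matrix (Fin ny) (Fin ny) ℝ) :
    Matrix (Fin ny) (Fin ny) ℝ :=
  (1 - W * C) * (A * S * Aᵀ + Q) * (1 - W * C)ᵀ + W * R * Wᵀ

theorem rho_eq_covUpdate (S : Matrix (Fin ny) (Fin ny) ℝ) :
    rho A Q G C R S = covUpdate A Q C R (Wtil A Q G C R S) S := by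
  unfold rho Atil Ftil Wtil covUpdate
  simp only [transpose_mul, transpose_sub, transpose_add, transpose_neg, transpose_one,
    Matrix.mul_add, Matrix.add_mul, Matrix.sub_mul, Matrix.mul_sub, Matrix.mul_assoc,
    Matrix.mul_one, Matrix.one_mul, Matrix.neg_mul, Matrix.mul_neg]
  abel

theorem covUpdate_sub_covUpdate_left (W : Matrix (Fin ny) (Fin nz) ℝ)
    (S₁ S₂ : Matrix (Fin ny) (Fin ny) ℝ) :
    covUpdate A Q C R W S₂ - covUpdate A Q C R W S₁
      = ((1 - W * C) * A) * (S₂ - S₁) * ((1 - W * C) * A)ᵀ := by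
  unfold covUpdate
  simp only [transpose_mul, transpose_sub, transpose_one, Matrix.mul_add, Matrix.add_mul,
    Matrix.sub_mul, Matrix.mul_sub, Matrix.mul_assoc, Matrix.mul_one, Matrix.one_mul]
  abel

theorem monotone_covUpdate (W : Matrix (Fin ny) (Fin nz) ℝ) :
    Monotone (covUpdate A Q C R W) := fun S₁ S₂ h ↦ by
  rw [le_iff, covUpdate_sub_covUpdate_left]
  exact (le_iff.mp h).mul_mul_transpose_same _

theorem covUpdate_smul_add_smul (W : Matrix (Fin ny) (Fin nz) ℝ)
    (S₁ S₂ : Matrix (Fin ny) (Fin ny) ℝ) {a b : ℝ} (hab : a + b = 1) :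
    covUpdate A Q C R W (a • S₁ + b • S₂)
      = a • covUpdate A Q C R W S₁ + b • covUpdate A Q C R W S₂ := by
  obtain rfl : b = 1 - a := by linarith
  unfold covUpdate
  simp only [Matrix.mul_add, Matrix.add_mul, Matrix.mul_smul, Matrix.smul_mul, smul_add,
    Matrix.mul_assoc]
  module

theorem concaveOn_covUpdate (W : Matrix (Fin ny) (Fin nz) ℝ) :
    ConcaveOn ℝ univ (covUpdate A Q C R W) :=
  ⟨convex_univ, fun S₁ _ S₂ _ _ _ _ _ hab ↦
    (covUpdate_smul_add_smul A Q C R W S₁ S₂ hab).ge⟩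

end CovUpdate

section Gains

variable {ny nz nd : ℕ} {A Q : Matrix (Fin ny) (Fin ny) ℝ} {G : Matrix (Fin ny) (Fin nd) ℝ}
  {C : Matrix (Fin nz) (Fin ny) ℝ} {R : Matrix (Fin nz) (Fin nz) ℝ}
  {S : Matrix (Fin ny) (Fin ny) ℝ}

theorem covUpdate_eq (W : Matrix (Fin ny) (Fin nz) ℝ) :
    covUpdate A Q C R W S = (A * S * Aᵀ + Q) - W * (C * (A * S * Aᵀ + Q))
      - (A * S * Aᵀ + Q) * Cᵀ * Wᵀ + W * Rt A Q C R S * Wᵀ := by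
  unfold covUpdate Rt
  simp only [transpose_sub, transpose_one, transpose_mul, Matrix.mul_add, Matrix.add_mul,
    Matrix.sub_mul, Matrix.mul_sub, Matrix.mul_assoc, Matrix.mul_one, Matrix.one_mul]
  abel

theorem covUpdate_sub_covUpdate_right (hS : S.IsSymm) (hQ : Q.IsSymm) (hR : R.IsSymm)
    (W W₀ : Matrix (Fin ny) (Fin nz) ℝ) :
    covUpdate A Q C R W S - covUpdate A Q C R W₀ S
      = (W - W₀) * Rt A Q C R S * (W - W₀)ᵀ
        + (W - W₀) * (W₀ * Rt A Q C R S - (A * S * Aᵀ + Q) * Cᵀ)ᵀ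
        + (W₀ * Rt A Q C R S - (A * S * Aᵀ + Q) * Cᵀ) * (W - W₀)ᵀ := by
  have hP : (A * S * Aᵀ + Q)ᵀ = A * S * Aᵀ + Q := by
    rw [transpose_add, transpose_mul, transpose_mul, hS.eq, hQ.eq, transpose_transpose,
      Matrix.mul_assoc]
  have hRt : (Rt A Q C R S)ᵀ = Rt A Q C R S := by
    rw [Rt, transpose_add, transpose_mul, transpose_mul, hP, hR.eq, transpose_transpose,
      ← Matrix.mul_assoc]
  rw [covUpdate_eq, covUpdate_eq]
  set P := A * S * Aᵀ + Q
  simp only [transpose_sub, transpose_mul, transpose_transpose, hP, hRt, Matrix.sub_mul,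
    Matrix.mul_sub, Matrix.mul_assoc]
  abel

theorem Rt_posDef (hS : S.PosSemidef) (hQ : Q.PosSemidef) (hR : R.PosDef) :
    (Rt A Q C R S).PosDef :=
  hR.posSemidef_add
    (((hS.mul_mul_transpose_same A).add hQ).mul_mul_transpose_same C)

theorem Kg_mul_Rt (hRt : (Rt A Q C R S).PosDef) :
    Kg A Q C R S * Rt A Q C R S = (A * S * Aᵀ + Q) * Cᵀ := by
  rw [Kg, Matrix.mul_assoc, nonsing_inv_mul _ ((isUnit_iff_isUnit_det _).mp hRt.isUnit),
    Matrix.mul_one]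

theorem Mg_mul_Rt (hRt : (Rt A Q C R S).PosDef) :
    Mg A Q G C R S * Rt A Q C R S
      = ((C * G)ᵀ * (Rt A Q C R S)⁻¹ * (C * G))⁻¹ * (C * G)ᵀ := by
  rw [Mg, Matrix.mul_assoc, nonsing_inv_mul _ ((isUnit_iff_isUnit_det _).mp hRt.isUnit),
    Matrix.mul_one]

theorem Mg_mul_CG (hRt : (Rt A Q C R S).PosDef) (hF : (C * G).rank = nd) :
    Mg A Q G C R S * (C * G) = 1 := by
  have hN := hRt.inv.transpose_mul_mul_same_of_rank_eq (hF.trans (Fintype.card_fin nd).symm)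
  rw [Mg, Matrix.mul_assoc, Matrix.mul_assoc, ← Matrix.mul_assoc (C * G)ᵀ,
    nonsing_inv_mul _ ((isUnit_iff_isUnit_det _).mp hN.isUnit)]

theorem Wtil_mul_CG (hRt : (Rt A Q C R S).PosDef) (hF : (C * G).rank = nd) :
    Wtil A Q G C R S * (C * G) = G := by
  rw [Wtil, Matrix.add_mul, Matrix.sub_mul, Matrix.mul_assoc G, Mg_mul_CG hRt hF,
    Matrix.mul_assoc (Kg A Q C R S * C * G), Mg_mul_CG hRt hF]
  simp only [Matrix.mul_one, Matrix.mul_assoc]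
  abel

theorem Wtil_mul_Rt_sub (hRt : (Rt A Q C R S).PosDef) :
    Wtil A Q G C R S * Rt A Q C R S - (A * S * Aᵀ + Q) * Cᵀ
      = (G - Kg A Q C R S * (C * G)) * ((C * G)ᵀ * (Rt A Q C R S)⁻¹ * (C * G))⁻¹
          * (C * G)ᵀ := by
  rw [Wtil, Matrix.add_mul, Matrix.sub_mul, Matrix.mul_assoc G, Mg_mul_Rt hRt, Kg_mul_Rt hRt,
    Matrix.mul_assoc (Kg A Q C R S * C * G), Mg_mul_Rt hRt]
  simp only [Matrix.sub_mul, Matrix.mul_assoc]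
  abel

theorem covUpdate_sub_rho (hS : S.PosSemidef) (hQ : Q.PosSemidef) (hR : R.PosDef)
    (hF : (C * G).rank = nd) {W : Matrix (Fin ny) (Fin nz) ℝ} (hW : W * (C * G) = G) :
    covUpdate A Q C R W S - rho A Q G C R S
      = (W - Wtil A Q G C R S) * Rt A Q C R S * (W - Wtil A Q G C R S)ᵀ := by
  have hRt := Rt_posDef (A := A) (C := C) hS hQ hR
  have hD : (W - Wtil A Q G C R S) * (C * G) = 0 := by
    rw [Matrix.sub_mul, hW, Wtil_mul_CG hRt hF, sub_self]
  have hcross : (W - Wtil A Q G C R S)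
      * (Wtil A Q G C R S * Rt A Q C R S - (A * S * Aᵀ + Q) * Cᵀ)ᵀ = 0 := by
    rw [Wtil_mul_Rt_sub hRt, transpose_mul, transpose_transpose, ← Matrix.mul_assoc, hD,
      Matrix.zero_mul]
  have hcross' : (Wtil A Q G C R S * Rt A Q C R S - (A * S * Aᵀ + Q) * Cᵀ)
      * (W - Wtil A Q G C R S)ᵀ = 0 := by
    simpa only [transpose_mul, transpose_transpose, transpose_zero] using
      congrArg transpose hcross
  have isSymm {n : ℕ} {X : Matrix (Fin n) (Fin n) ℝ} (hX : X.PosSemidef) : X.IsSymm :=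
    isHermitian_iff_isSymm.mp hX.isHermitian
  rw [rho_eq_covUpdate,
    covUpdate_sub_covUpdate_right (isSymm hS) (isSymm hQ) (isSymm hR.posSemidef),
    hcross, hcross', add_zero, add_zero]

end Gains

section Loewner

variable {ny nz nd : ℕ} {A Q : Matrix (Fin ny) (Fin ny) ℝ} {G : Matrix (Fin ny) (Fin nd) ℝ}
  {C : Matrix (Fin nz) (Fin ny) ℝ} {R : Matrix (Fin nz) (Fin nz) ℝ}

theorem isLeast_rho {S : Matrix (Fin ny) (Fin ny) ℝ} (hS : 0 ≤ S) (hQ : Q.PosSemidef)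
    (hR : R.PosDef) (hF : (C * G).rank = nd) :
    IsLeast (range fun W : {W // W * (C * G) = G} ↦ covUpdate A Q C R W.1 S)
      (rho A Q G C R S) := by
  have hRt := Rt_posDef (A := A) (C := C) hS.posSemidef hQ hR
  refine ⟨⟨⟨Wtil A Q G C R S, Wtil_mul_CG hRt hF⟩, (rho_eq_covUpdate ..).symm⟩, ?_⟩
  rintro _ ⟨⟨W, hW⟩, rfl⟩
  rw [le_iff, covUpdate_sub_rho hS.posSemidef hQ hR hF hW]
  exact hRt.posSemidef.mul_mul_transpose_same _

theorem mapsTo_rho (hQ : Q.PosSemidef) (hR : R.PosSemidef) :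
    MapsTo (rho A Q G C R) (Ici 0) (Ici 0) := fun S hS ↦ by
  have hS : S.PosSemidef := hS.posSemidef
  exact (((hS.mul_mul_transpose_same _).add (hQ.mul_mul_transpose_same _)).add
    (hR.mul_mul_transpose_same _)).nonneg

theorem monotoneOn_rho (hQ : Q.PosSemidef) (hR : R.PosDef) (hF : (C * G).rank = nd) :
    MonotoneOn (rho A Q G C R) (Ici 0) :=
  monotoneOn_of_isLeast_range (g := fun W : {W // W * (C * G) = G} ↦ covUpdate A Q C R W.1)
    (fun W ↦ (monotone_covUpdate A Q C R W.1).monotoneOn _) fun _ hS ↦ isLeast_rho hS hQ hR hF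

theorem concaveOn_rho (hQ : Q.PosSemidef) (hR : R.PosDef) (hF : (C * G).rank = nd) :
    ConcaveOn ℝ (Ici 0) (rho A Q G C R) :=
  concaveOn_of_isLeast_range (g := fun W : {W // W * (C * G) = G} ↦ covUpdate A Q C R W.1)
    (convex_Ici 0)
    (fun W ↦ (concaveOn_covUpdate A Q C R W.1).subset (subset_univ _) (convex_Ici 0))
    fun _ hS ↦ isLeast_rho hS hQ hR hF

end Loewner

section Horizon

variable {ny nz nd : ℕ} {A Q : ℕ → Matrix (Fin ny) (Fin ny) ℝ}
  {G : ℕ → Matrix (Fin ny) (Fin nd) ℝ} {C : ℕ → Matrix (Fin nz) (Fin ny) ℝ}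
  {R : ℕ → Matrix (Fin nz) (Fin nz) ℝ}

theorem mapsTo_phiMap (hQ : ∀ k, (Q k).PosSemidef) (hR : ∀ k, (R k).PosSemidef) (k : ℕ) :
    MapsTo (phiMap A Q G C R k) (Ici 0) (Ici 0) := by
  induction k with
  | zero => exact mapsTo_id _
  | succ k ih => exact (mapsTo_rho (hQ k) (hR (k + 1))).comp ih

theorem monotoneOn_phiMap (hQ : ∀ k, (Q k).PosSemidef) (hR : ∀ k, (R k).PosDef)
    (hF : ∀ k, (C (k + 1) * G k).rank = nd) (k : ℕ) :
    MonotoneOn (phiMap A Q G C R k) (Ici 0) := by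
  induction k with
  | zero => exact monotoneOn_id
  | succ k ih =>
    exact (monotoneOn_rho (hQ k) (hR (k + 1)) (hF k)).comp ih
      (mapsTo_phiMap hQ (fun k ↦ (hR k).posSemidef) k)

theorem concaveOn_phiMap (hQ : ∀ k, (Q k).PosSemidef) (hR : ∀ k, (R k).PosDef)
    (hF : ∀ k, (C (k + 1) * G k).rank = nd) (k : ℕ) :
    ConcaveOn ℝ (Ici 0) (phiMap A Q G C R k) := by
  induction k with
  | zero => exact concaveOn_id (convex_Ici 0)
  | succ k ih =>
    exact (concaveOn_rho (hQ k) (hR (k + 1)) (hF k)).comp_of_mapsTo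
      (monotoneOn_rho (hQ k) (hR (k + 1)) (hF k)) ih
      (mapsTo_phiMap hQ (fun k ↦ (hR k).posSemidef) k)

end Horizon

/-- each k-horizon map `φ_k` (`k ≤ N`) is monotone and concave with
respect to the Loewner order. -/
theorem khorizon_monotone_concave {ny nz nd : ℕ} (N : ℕ)
    (A Q : ℕ → Matrix (Fin ny) (Fin ny) ℝ) (G : ℕ → Matrix (Fin ny) (Fin nd) ℝ)
    (C : ℕ → Matrix (Fin nz) (Fin ny) ℝ) (R : ℕ → Matrix (Fin nz) (Fin nz) ℝ)
    (hQ : ∀ k, (Q k).PosDef) (hR : ∀ k, (R k).PosDef)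
    (hF : ∀ k, (C (k + 1) * G k).rank = nd) :
    (∀ k, k ≤ N → ∀ S1 S2 : Matrix (Fin ny) (Fin ny) ℝ,
      S1.PosSemidef → S2.PosSemidef → (S2 - S1).PosSemidef →
      (phiMap A Q G C R k S2 - phiMap A Q G C R k S1).PosSemidef) ∧
    (∀ k, k ≤ N → ∀ α : ℝ, 0 ≤ α → α ≤ 1 →
      ∀ S1 S2 : Matrix (Fin ny) (Fin ny) ℝ, S1.PosSemidef → S2.PosSemidef →
      (phiMap A Q G C R k (α • S1 + (1 - α) • S2)
        - (α • phiMap A Q G C R k S1 + (1 - α) • phiMap A Q G C R k S2)).PosSemidef) := by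
  have hQ' k := (hQ k).posSemidef
  refine ⟨fun k _ S1 S2 hS1 hS2 hle ↦ ?_, fun k _ α h0 h1 S1 S2 hS1 hS2 ↦ ?_⟩
  · exact monotoneOn_phiMap hQ' hR hF k hS1.nonneg hS2.nonneg hle
  · exact (concaveOn_phiMap hQ' hR hF k).2 hS1.nonneg hS2.nonneg h0 (sub_nonneg.2 h1)
      (add_sub_cancel _ _)
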